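/- Let P be the uniform distribution on [a,b] with a<b and let n ≥ 1. Among all sets of n points {c_1,...,c_n} ⊆ [a,b] with c_n = b fixed, the minimal distortion error equals (b-a)^2 / (3(2n-1)^2), attained by c_j = a + (2j-1)(b-a)/(2n-1) for 1 ≤ j ≤ n. -/

import Mathlib

open MeasureTheory intervalIntegral Finset

/-!
Sort the centers; the largest is `b`. Left of the smallest center `x` the squared distance is
`(t - x)²`, and on a gap `[u, v]` between consecutive centers it is at least the squared distance
to the nearer endpoint, so the error integral is at least `g³/3` summed over the `2n - 1` pieces
(the first segment and the two halves of each gap), whose lengths `g` add up to `b - a`. The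
tangent-line bound `g³ ≥ 3h²g - 2h³` at `h = (b - a)/(2n - 1)` turns this into
`(b - a)³ / (3(2n - 1)²)`. The centers `a + (2j + 1)h` attain it: each cell of radius `h` around
a center contributes at most `2h³/3`, the half cell ending at `b` at most `h³/3`.
-/

lemma integral_sub_sq (x y c : ℝ) :
    ∫ t in x..y, (t - c) ^ 2 = ((y - c) ^ 3 - (x - c) ^ 3) / 3 := by
  rw [integral_comp_sub_right (fun t => t ^ 2), integral_pow]
  norm_num

lemma three_mul_sq_mul_le {g h : ℝ} (hg : 0 ≤ g) (hh : 0 ≤ h) :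
    3 * h ^ 2 * g ≤ g ^ 3 + 2 * h ^ 3 := by
  nlinarith [mul_nonneg (sq_nonneg (g - h)) (by linarith : 0 ≤ g + 2 * h)]

lemma continuous_inf'_sq_sub (s : Finset ℝ) (hs : s.Nonempty) :
    Continuous fun t => s.inf' hs fun x => (t - x) ^ 2 :=
  Continuous.finset_inf'_apply hs fun _ _ => by fun_prop

lemma le_integral_of_min_sq_sub_le {g : ℝ → ℝ} (hg : Continuous g) {u v : ℝ} (huv : u ≤ v)
    (hle : ∀ t ∈ Set.Icc u v, min ((t - u) ^ 2) ((t - v) ^ 2) ≤ g t) :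
    (v - u) ^ 3 / 12 ≤ ∫ t in u..v, g t := by
  set m := (u + v) / 2 with hm
  have left : ∫ t in u..m, (t - u) ^ 2 ≤ ∫ t in u..m, g t :=
    integral_mono_on (by linarith [hm]) (Continuous.intervalIntegrable (by fun_prop) _ _)
      (hg.intervalIntegrable _ _) fun t ht => by
      simpa [min_eq_left (by nlinarith [ht.1, ht.2, hm] : (t - u) ^ 2 ≤ (t - v) ^ 2)] using
        hle t ⟨ht.1, by linarith [ht.2, hm]⟩
  have right : ∫ t in m..v, (t - v) ^ 2 ≤ ∫ t in m..v, g t :=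
    integral_mono_on (by linarith [hm]) (Continuous.intervalIntegrable (by fun_prop) _ _)
      (hg.intervalIntegrable _ _) fun t ht => by
      simpa [min_eq_right (by nlinarith [ht.1, ht.2, hm] : (t - v) ^ 2 ≤ (t - u) ^ 2)] using
        hle t ⟨by linarith [ht.1, hm], ht.2⟩
  rw [integral_sub_sq] at left right
  rw [← integral_add_adjacent_intervals (hg.intervalIntegrable u m) (hg.intervalIntegrable m v)]
  have : (v - u) ^ 3 / 12 = ((m - u) ^ 3 - (u - u) ^ 3) / 3 + ((v - v) ^ 3 - (m - v) ^ 3) / 3 := by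
    ring
  linarith

lemma inf'_insert_sq_sub_eq {s : Finset ℝ} (hs : s.Nonempty) {M t : ℝ} (hM : s.max' hs < M)
    (ht : t ≤ s.max' hs) :
    ((insert M s).inf' (s.insert_nonempty M) fun x => (t - x) ^ 2) =
      s.inf' hs fun x => (t - x) ^ 2 := by
  rw [inf'_insert hs]
  refine min_eq_right ((inf'_le _ (s.max'_mem hs)).trans ?_)
  nlinarith

lemma min_sq_sub_le_inf'_insert {s : Finset ℝ} (hs : s.Nonempty) {M t : ℝ}
    (ht : t ∈ Set.Icc (s.max' hs) M) :
    min ((t - s.max' hs) ^ 2) ((t - M) ^ 2) ≤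
      (insert M s).inf' (s.insert_nonempty M) fun x => (t - x) ^ 2 := by
  refine le_inf' _ _ fun x hx => ?_
  rcases mem_insert.1 hx with rfl | hx
  · exact min_le_right _ _
  · have := s.le_max' x hx
    exact (min_le_left _ _).trans (by nlinarith [ht.1])

-- Each of the `2 #s - 1` pieces, of length `g`, contributes `g³/3 ≥ h²g - 2h³/3`.
lemma le_integral_inf'_sq_sub {a h : ℝ} (hh : 0 ≤ h) (s : Finset ℝ) (hs : s.Nonempty)
    (ha : ∀ x ∈ s, a ≤ x) :
    h ^ 2 * (s.max' hs - a) - 2 * (2 * #s - 1) * h ^ 3 / 3 ≤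
      ∫ t in a..s.max' hs, s.inf' hs fun x => (t - x) ^ 2 := by
  induction s using Finset.induction_on_max with
  | empty => exact absurd hs Finset.not_nonempty_empty
  | insert M s hlt ih =>
    rcases s.eq_empty_or_nonempty with rfl | hs'
    · have hM := ha M (mem_singleton_self M)
      simp only [insert_empty, max'_singleton, inf'_singleton, card_singleton, integral_sub_sq]
      nlinarith [three_mul_sq_mul_le (sub_nonneg.2 hM) hh]
    · set M' := s.max' hs'
      have hM' : M' < M := hlt M' (s.max'_mem hs')
      have haM' : a ≤ M' := ha M' (mem_insert_of_mem (s.max'_mem hs'))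
      have hmax : (insert M s).max' hs = M := by
        rw [max'_insert M s hs']; exact max_eq_left hM'.le
      have hcard : #(insert M s) = #s + 1 := card_insert_of_notMem fun hM => (hlt M hM).false
      have hF := continuous_inf'_sq_sub (insert M s) hs
      have hlow : ∫ t in a..M', ((insert M s).inf' hs fun x => (t - x) ^ 2) =
          ∫ t in a..M', s.inf' hs' fun x => (t - x) ^ 2 :=
        integral_congr fun t ht => inf'_insert_sq_sub_eq hs' hM' (by
          rw [Set.uIcc_of_le haM'] at ht; exact ht.2)
      have hgap := le_integral_of_min_sq_sub_le hF hM'.le fun t ht =>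
        min_sq_sub_le_inf'_insert hs' ht
      have hih := ih hs' fun x hx => ha x (mem_insert_of_mem hx)
      rw [hmax, hcard, ← integral_add_adjacent_intervals (hF.intervalIntegrable a M')
        (hF.intervalIntegrable M' M), hlow]
      push_cast
      nlinarith [three_mul_sq_mul_le (by linarith : 0 ≤ (M - M') / 2) hh]

lemma iInf_sq_sub_eq_inf'_image {ι : Type*} [Fintype ι] [Nonempty ι] (c : ι → ℝ) (t : ℝ) :
    ⨅ j, (t - c j) ^ 2 = (univ.image c).inf' (univ_nonempty.image c) fun x => (t - x) ^ 2 := by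
  rw [inf'_image, inf'_univ_eq_ciInf]
  rfl

lemma le_integral_iInf_sq_sub {ι : Type*} [Fintype ι] {a b : ℝ} (c : ι → ℝ)
    (hc : ∀ j, c j ∈ Set.Icc a b) (j₀ : ι) (hb : c j₀ = b) :
    (b - a) ^ 3 / (3 * (2 * Fintype.card ι - 1) ^ 2) ≤ ∫ t in a..b, ⨅ j, (t - c j) ^ 2 := by
  have : Nonempty ι := ⟨j₀⟩
  set s := univ.image c
  have hs : s.Nonempty := univ_nonempty.image c
  have hmem : ∀ x ∈ s, x ∈ Set.Icc a b := by
    simp only [s, mem_image, mem_univ, true_and, forall_exists_index, forall_apply_eq_imp_iff]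
    exact hc
  have hmax : s.max' hs = b :=
    le_antisymm (s.max'_le hs _ fun x hx => (hmem x hx).2) (hb ▸ s.le_max' _ (by simp [s]))
  have hcard : (#s : ℝ) ≤ Fintype.card ι := by exact_mod_cast card_image_le
  set N := 2 * (Fintype.card ι : ℝ) - 1
  have hN : 1 ≤ N := by
    have : (1 : ℝ) ≤ Fintype.card ι := by exact_mod_cast Fintype.card_pos
    linarith
  have hab : a ≤ b := (hc j₀).1.trans (hc j₀).2
  have key := le_integral_inf'_sq_sub (h := (b - a) / N)
    (div_nonneg (sub_nonneg.2 hab) (by linarith)) s hs fun x hx => (hmem x hx).1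
  rw [hmax] at key
  simp_rw [iInf_sq_sub_eq_inf'_image c]
  calc (b - a) ^ 3 / (3 * N ^ 2)
        = ((b - a) / N) ^ 2 * (b - a) - 2 * N * ((b - a) / N) ^ 3 / 3 := by
        field_simp; ring
    _ ≤ ((b - a) / N) ^ 2 * (b - a) - 2 * (2 * #s - 1) * ((b - a) / N) ^ 3 / 3 := by
        gcongr; linarith
    _ ≤ _ := key

lemma integral_inf'_sq_sub_le {s : Finset ℝ} (hs : s.Nonempty) {x u v : ℝ} (hx : x ∈ s)
    (huv : u ≤ v) :
    ∫ t in u..v, s.inf' hs (fun y => (t - y) ^ 2) ≤ ((v - x) ^ 3 - (u - x) ^ 3) / 3 := by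
  rw [← integral_sub_sq]
  exact integral_mono_on huv ((continuous_inf'_sq_sub s hs).intervalIntegrable _ _)
    (Continuous.intervalIntegrable (by fun_prop) _ _) fun t _ => inf'_le _ hx

lemma integral_inf'_sq_sub_le_of_grid {s : Finset ℝ} (hs : s.Nonempty) {a h : ℝ} (hh : 0 ≤ h)
    (m : ℕ) (hgrid : ∀ k ≤ m, a + (2 * k + 1) * h ∈ s) :
    ∫ t in a..a + (2 * m + 1) * h, s.inf' hs (fun x => (t - x) ^ 2) ≤
      (2 * m + 1) * h ^ 3 / 3 := by
  have hF := continuous_inf'_sq_sub s hs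
  have hcells := sum_integral_adjacent_intervals (a := fun k : ℕ => a + 2 * k * h) (n := m)
    (μ := volume) fun _ _ => hF.intervalIntegrable _ _
  simp only [Nat.cast_zero, mul_zero, zero_mul, add_zero] at hcells
  have hcell : ∀ k ∈ range m, ∫ t in a + 2 * k * h..a + 2 * ↑(k + 1) * h,
      s.inf' hs (fun x => (t - x) ^ 2) ≤ 2 * h ^ 3 / 3 := fun k hk =>
    (integral_inf'_sq_sub_le hs (hgrid k (mem_range.1 hk).le) (by push_cast; nlinarith)).trans_eq
      (by push_cast; ring)
  have hlast := integral_inf'_sq_sub_le hs (hgrid m le_rfl)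
    (by nlinarith : a + 2 * m * h ≤ a + (2 * m + 1) * h)
  rw [← integral_add_adjacent_intervals (hF.intervalIntegrable _ (a + 2 * m * h))
    (hF.intervalIntegrable _ _), ← hcells]
  have := sum_le_sum hcell
  simp only [sum_const, card_range, nsmul_eq_mul] at this
  nlinarith

lemma integral_iInf_sq_sub_uniform_le {a b : ℝ} (hab : a ≤ b) (n : ℕ) [NeZero n] :
    ∫ t in a..b, ⨅ j : Fin n, (t - (a + (2 * (j : ℝ) + 1) * (b - a) / (2 * n - 1))) ^ 2 ≤
      (b - a) ^ 3 / (3 * (2 * n - 1) ^ 2) := by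
  have hm : ((n - 1 : ℕ) : ℝ) = n - 1 := by
    rw [Nat.cast_sub NeZero.one_le, Nat.cast_one]
  set N := 2 * (n : ℝ) - 1
  have hN : 1 ≤ N := by
    have : (1 : ℝ) ≤ n := by exact_mod_cast NeZero.one_le
    linarith
  set c : Fin n → ℝ := fun j => a + (2 * (j : ℝ) + 1) * ((b - a) / N)
  have key := integral_inf'_sq_sub_le_of_grid (univ_nonempty.image c)
    (div_nonneg (sub_nonneg.2 hab) (by linarith)) (n - 1) fun k hk =>
      mem_image_of_mem c (mem_univ ⟨k, by have := NeZero.one_le (n := n); omega⟩)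
  simp_rw [← iInf_sq_sub_eq_inf'_image, hm] at key
  have hN0 : N ≠ 0 := by linarith
  rw [show a + (2 * (n - 1) + 1) * ((b - a) / N) = b by field_simp; ring,
    show (2 * (n - 1) + 1) * ((b - a) / N) ^ 3 / 3 = (b - a) ^ 3 / (3 * N ^ 2) by
      field_simp; ring] at key
  simpa only [c, mul_div_assoc] using key

lemma uniform_center_mem_Icc {a b : ℝ} (hab : a ≤ b) {n : ℕ} (j : Fin n) :
    a + (2 * (j : ℝ) + 1) * (b - a) / (2 * n - 1) ∈ Set.Icc a b := by
  have hj : 2 * (j : ℝ) + 1 ≤ 2 * n - 1 := by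
    have : (j : ℝ) + 1 ≤ n := by exact_mod_cast j.isLt
    linarith
  have hba : 0 ≤ b - a := sub_nonneg.2 hab
  have hfrac : (2 * (j : ℝ) + 1) * (b - a) / (2 * n - 1) ∈ Set.Icc 0 (b - a) :=
    ⟨div_nonneg (by positivity) (by linarith), by rw [div_le_iff₀ (by linarith)]; nlinarith⟩
  exact ⟨by linarith [hfrac.1], by linarith [hfrac.2]⟩

theorem stmt2 (a b : ℝ) (hab : a < b) (n : ℕ) (hn : 1 ≤ n) :
    IsLeast
      {V : ℝ | ∃ c : Fin n → ℝ, (∀ j, c j ∈ Set.Icc a b) ∧ c ⟨n - 1, by omega⟩ = b ∧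
        V = (1 / (b - a)) * ∫ t in a..b, ⨅ j : Fin n, (t - c j)^2}
      ((b - a)^2 / (3 * (2 * (n : ℝ) - 1)^2)) ∧
    (1 / (b - a)) * (∫ t in a..b,
        ⨅ j : Fin n, (t - (a + (2 * (j : ℝ) + 1) * (b - a) / (2 * (n : ℝ) - 1)))^2)
      = (b - a)^2 / (3 * (2 * (n : ℝ) - 1)^2) := by
  have : NeZero n := ⟨by omega⟩
  set N := 2 * (n : ℝ) - 1
  have hN0 : N ≠ 0 := by
    have : (1 : ℝ) ≤ n := by exact_mod_cast hn
    linarith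
  have hscale : (b - a) ^ 2 / (3 * N ^ 2) = 1 / (b - a) * ((b - a) ^ 3 / (3 * N ^ 2)) := by
    field_simp [(sub_pos.2 hab).ne']
  have hlower : ∀ c : Fin n → ℝ, (∀ j, c j ∈ Set.Icc a b) → c ⟨n - 1, by omega⟩ = b →
      (b - a) ^ 2 / (3 * N ^ 2) ≤ 1 / (b - a) * ∫ t in a..b, ⨅ j : Fin n, (t - c j) ^ 2 :=
    fun c hc hcb => by
      rw [hscale]
      gcongr
      simpa using le_integral_iInf_sq_sub c hc _ hcb
  set c : Fin n → ℝ := fun j => a + (2 * (j : ℝ) + 1) * (b - a) / N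
  have hc : ∀ j, c j ∈ Set.Icc a b := uniform_center_mem_Icc hab.le
  have hcb : c ⟨n - 1, by omega⟩ = b := by
    simp only [c, Nat.cast_sub hn, Nat.cast_one]
    field_simp
    ring
  have hopt : 1 / (b - a) * ∫ t in a..b, ⨅ j : Fin n, (t - c j) ^ 2 =
      (b - a) ^ 2 / (3 * N ^ 2) := by
    refine le_antisymm ?_ (hlower c hc hcb)
    rw [hscale]
    gcongr
    exact integral_iInf_sq_sub_uniform_le hab.le n
  exact ⟨⟨⟨c, hc, hcb, hopt.symm⟩, by rintro V ⟨c, hc, hcb, rfl⟩; exact hlower c hc hcb⟩, hopt⟩
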